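/- arXiv:1303.2707 — 2 statements merged into one kernel-verified Lean document; each statement's English description precedes it below -/
import Mathlib

section
/- Let G be a finite subgroup of the orthogonal group O(n) acting on ℝⁿ. For x, y ∈ ℝⁿ, y lies in the convex hull of the orbit {g·x : g ∈ G} if and only if sup_{g∈G} ⟨z, g·y⟩ ≤ sup_{g∈G} ⟨z, g·x⟩ for all z ∈ ℝⁿ. -/
open Matrix Set

/-! Both sides are statements about the support function `z ↦ ⨆ g, z ⬝ᵥ g x` of the orbit of `x`.
For a finite point set, a point lies in the convex hull iff every linear functional is bounded at
it by its maximum over the set (Hahn–Banach separation, the hull being compact). The convex hull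
of an orbit is invariant under the group, so `y` lies in it iff its whole orbit does, and the
support function of the orbit of `y` is then dominated by that of the orbit of `x`. -/

section

variable {m : Type*} [Fintype m]

theorem mem_convexHull_range_iff_forall_dotProduct_le_iSup {ι : Type*} [Finite ι] [Nonempty ι]
    (v : ι → m → ℝ) (y : m → ℝ) :
    y ∈ convexHull ℝ (range v) ↔ ∀ z : m → ℝ, z ⬝ᵥ y ≤ ⨆ i, z ⬝ᵥ v i := by
  classical
  constructor
  · intro hy z
    have hv : range v ⊆ {w | z ⬝ᵥ w ≤ ⨆ i, z ⬝ᵥ v i} := by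
      rintro _ ⟨i, rfl⟩
      exact le_ciSup (finite_range fun i => z ⬝ᵥ v i).bddAbove i
    exact convexHull_min hv (convex_halfSpace_le (dotProductEquiv ℝ m z).isLinear _) hy
  · intro h
    by_contra hy
    obtain ⟨f, u, hf, hu⟩ := geometric_hahn_banach_closed_point (convex_convexHull ℝ _)
      ((finite_range v).isCompact_convexHull (𝕜 := ℝ)).isClosed hy
    set z := (dotProductEquiv ℝ m).symm f.toLinearMap
    have hfz : ∀ w, f w = z ⬝ᵥ w := fun w =>
      (LinearMap.congr_fun ((dotProductEquiv ℝ m).apply_symm_apply f.toLinearMap) w).symm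
    have hsup : (⨆ i, z ⬝ᵥ v i) ≤ u :=
      ciSup_le fun i => (hfz _ ▸ hf _ (subset_convexHull ℝ _ (mem_range_self i))).le
    exact (h z).not_gt (hsup.trans_lt (hfz y ▸ hu))

variable [DecidableEq m] {G : Type*} [Monoid G] (ρ : G →* Matrix m m ℝ)

theorem mulVec_mem_convexHull_range_mulVec {x y : m → ℝ}
    (hy : y ∈ convexHull ℝ (range fun g => ρ g *ᵥ x)) (g : G) :
    ρ g *ᵥ y ∈ convexHull ℝ (range fun h => ρ h *ᵥ x) := by
  have horbit : (ρ g *ᵥ ·) '' range (fun h => ρ h *ᵥ x) ⊆ range fun h => ρ h *ᵥ x := by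
    rintro _ ⟨_, ⟨h, rfl⟩, rfl⟩
    exact ⟨g * h, by simp only [map_mul, mulVec_mulVec]⟩
  have himage := (mulVecLin (ρ g)).image_convexHull (range fun h => ρ h *ᵥ x)
  exact convexHull_mono horbit (himage ▸ mem_image_of_mem _ hy)

theorem mem_convexHull_range_mulVec_iff [Finite G] (x y : m → ℝ) :
    y ∈ convexHull ℝ (range fun g => ρ g *ᵥ x) ↔
      ∀ z : m → ℝ, (⨆ g, z ⬝ᵥ ρ g *ᵥ y) ≤ ⨆ g, z ⬝ᵥ ρ g *ᵥ x := by
  rw [mem_convexHull_range_iff_forall_dotProduct_le_iSup]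
  constructor
  · intro hy z
    exact ciSup_le fun g => (mem_convexHull_range_iff_forall_dotProduct_le_iSup _ _).1
      (mulVec_mem_convexHull_range_mulVec ρ
        ((mem_convexHull_range_iff_forall_dotProduct_le_iSup _ _).2 hy) g) z
  · intro h z
    calc z ⬝ᵥ y = z ⬝ᵥ ρ 1 *ᵥ y := by rw [map_one, one_mulVec]
      _ ≤ ⨆ g, z ⬝ᵥ ρ g *ᵥ y := le_ciSup (finite_range fun g => z ⬝ᵥ ρ g *ᵥ y).bddAbove 1
      _ ≤ ⨆ g, z ⬝ᵥ ρ g *ᵥ x := h z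

end

theorem stmt_1 (n : ℕ) (G : Subgroup (Matrix.orthogonalGroup (Fin n) ℝ))
    (hG : (G : Set (Matrix.orthogonalGroup (Fin n) ℝ)).Finite) (x y : Fin n → ℝ) :
    y ∈ convexHull ℝ {v | ∃ g ∈ G, (g : Matrix (Fin n) (Fin n) ℝ).mulVec x = v} ↔
      ∀ z : Fin n → ℝ,
        (⨆ g : G, z ⬝ᵥ (g.1 : Matrix (Fin n) (Fin n) ℝ).mulVec y) ≤
          ⨆ g : G, z ⬝ᵥ (g.1 : Matrix (Fin n) (Fin n) ℝ).mulVec x := by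
  have : Finite G := hG.to_subtype
  have horbit : {v | ∃ g ∈ G, (g : Matrix (Fin n) (Fin n) ℝ).mulVec x = v} =
      range fun g : G => (g.1 : Matrix (Fin n) (Fin n) ℝ) *ᵥ x := by
    ext v
    simp
  rw [horbit]
  exact mem_convexHull_range_mulVec_iff ((orthogonalGroup (Fin n) ℝ).subtype.comp G.subtype) x y
end

section
/- Let n = 4 and f(x) = (1/4)(x₁²+x₂²+x₃²+x₄²)² − |x₁x₂x₃x₄|. Then for all x in the cone {x : x₁ ≥ x₂ ≥ x₃ ≥ x₄, x₃+x₄ ≥ 0} with all coordinates making the product positive region (so that |x₁x₂x₃x₄| = x₁x₂x₃x₄ on this cone), one has (x₃+x₄)(x₁²+x₂²+x₃²+x₄² − x₁x₂) ≥ 0; but at x = (1,1,1,1/4), the derivative ∂f/∂x₄ = (x₁²+x₂²+x₃²+x₄²)x₄ − x₁x₂x₃ is negative. -/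
theorem mul_le_sq_add_sq {R : Type*} [CommRing R] [LinearOrder R] [IsStrictOrderedRing R]
    (a b : R) : a * b ≤ a ^ 2 + b ^ 2 := by
  linarith [two_mul_le_add_sq a b, sq_nonneg a, sq_nonneg b]

theorem stmt_15 :
    (∀ x1 x2 x3 x4 : ℝ, x1 ≥ x2 → x2 ≥ x3 → x3 ≥ x4 → x3 + x4 ≥ 0 →
        (x3 + x4) * (x1 ^ 2 + x2 ^ 2 + x3 ^ 2 + x4 ^ 2 - x1 * x2) ≥ 0) ∧
      ((1 ^ 2 + 1 ^ 2 + 1 ^ 2 + ((1 : ℝ) / 4) ^ 2) * (1 / 4) - 1 * 1 * 1 < 0) := by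
  refine ⟨fun x1 x2 x3 x4 _ _ _ h34 => mul_nonneg h34 ?_, by norm_num⟩
  linarith [mul_le_sq_add_sq x1 x2, sq_nonneg x3, sq_nonneg x4]
end
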